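/- Let R be a commutative Noetherian local ring, let f ∈ R be a non-zerodivisor, and let ψ: R^k → (R/(f))^l be a surjective R-module homomorphism for some natural numbers k, l. Then ker ψ is a free R-module of rank k. -/

import Mathlib

/-!
Lift `ψ` along `R^l → (R/(f))^l` to `φ : R^k → R^l`. Multiplication by `f` on `R^l` is injective
with cokernel `(R/(f))^l`, so `ker ψ` is the pullback `{(x, y) | φ x + f y = 0}`, i.e. the kernel of
the surjection `(x, y) ↦ φ x + f y` from `R^k × R^l` onto `R^l`. That surjection splits, so
`ker ψ × R^l ≅ R^k × R^l`: `ker ψ` is finitely generated and projective, hence free over the local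
ring `R`, and comparing ranks gives `k`.
-/

open Function LinearMap

section Pullback

variable {R M N P Q : Type*} [CommRing R] [AddCommGroup M] [Module R M] [AddCommGroup N]
  [Module R N] [AddCommGroup P] [Module R P] [AddCommGroup Q] [Module R Q]

theorem LinearMap.nonempty_equiv_ker_prod_of_surjective [Module.Projective R P] {g : N →ₗ[R] P}
    (hg : Surjective g) : Nonempty (N ≃ₗ[R] ker g × P) := by
  obtain ⟨s, hs⟩ := Module.projective_lifting_property g LinearMap.id hg
  exact ⟨((exact_subtype_ker_map g).splitSurjectiveEquiv (ker g).injective_subtype ⟨s, hs⟩).1⟩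

variable {φ : M →ₗ[R] N} {h : P →ₗ[R] N} {π : N →ₗ[R] Q}

theorem LinearMap.surjective_coprod_of_exact (hex : Exact h π) (hφ : Surjective (π ∘ₗ φ)) :
    Surjective (φ.coprod h) := by
  rw [← range_eq_top, range_coprod, ← hex.linearMap_ker_eq, ← Submodule.comap_map_eq,
    ← range_comp, range_eq_top.2 hφ, Submodule.comap_top]

noncomputable def LinearMap.kerCoprodEquivKerComp (hex : Exact h π) (hh : Injective h) :
    ker (φ.coprod h) ≃ₗ[R] ker (π ∘ₗ φ) :=
  LinearEquiv.ofBijective ((fst R M P ∘ₗ (ker (φ.coprod h)).subtype).codRestrict _ fun p => by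
      have hp : φ p.1.1 = h (-p.1.2) := by
        rw [map_neg, eq_neg_iff_add_eq_zero]; exact p.2
      simp [hp, hex.apply_apply_eq_zero])
    ⟨by
      rintro ⟨⟨x, y⟩, hxy⟩ ⟨⟨x', y'⟩, hxy'⟩ hx
      obtain rfl : x = x' := congrArg Subtype.val hx
      have hy : h y = h y' := by
        rw [mem_ker, coprod_apply] at hxy hxy'
        exact add_left_cancel (hxy.trans hxy'.symm)
      exact Subtype.ext (Prod.ext rfl (hh hy)),
     by
      rintro ⟨x, hx⟩
      obtain ⟨y, hy⟩ := (hex (φ x)).1 hx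
      exact ⟨⟨(x, -y), by simp [hy]⟩, rfl⟩⟩

end Pullback

theorem Module.free_and_finrank_add_eq_of_prod_equiv {R K F M : Type*} [CommRing R] [IsLocalRing R]
    [AddCommGroup K] [Module R K] [AddCommGroup F] [Module R F] [AddCommGroup M] [Module R M]
    [Module.Free R F] [Module.Finite R F] [Module.Free R M] [Module.Finite R M]
    (e : (K × F) ≃ₗ[R] M) :
    Module.Free R K ∧ Module.finrank R K + Module.finrank R F = Module.finrank R M := by
  have : Module.Projective R (K × F) := .of_equiv e.symm
  have : Module.Projective R K := .of_split _ _ (fst_comp_inl R K F)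
  have : Module.Finite R (K × F) := .equiv e.symm
  have : Module.Finite R K := .of_surjective (fst R K F) Prod.fst_surjective
  have : Module.Free R K := Module.free_of_flat_of_isLocalRing
  exact ⟨this, by rw [← Module.finrank_prod, e.finrank_eq]⟩

theorem Ideal.exact_smul_piMap_mkQ_span_singleton {R ι : Type*} [CommRing R] (x : R) :
    Exact (x • LinearMap.id : (ι → R) →ₗ[R] ι → R) (piMap fun _ => (Ideal.span {x}).mkQ) := by
  intro v
  simp only [coe_piMap, funext_iff, Pi.map_apply, Pi.zero_apply, Submodule.mkQ_apply,
    Submodule.Quotient.mk_eq_zero, Ideal.mem_span_singleton', LinearMap.smul_apply, id_apply,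
    Pi.smul_apply, smul_eq_mul, Set.mem_range, mul_comm _ x]
  exact Classical.skolem

theorem maruyama_kernel_free_general {R : Type*} [CommRing R]
    [IsLocalRing R] {f : R} (hf : f ∈ nonZeroDivisors R) (k l : ℕ)
    (ψ : (Fin k → R) →ₗ[R] (Fin l → R ⧸ Ideal.span ({f} : Set R)))
    (hψ : Function.Surjective ψ) :
    Module.Free R (LinearMap.ker ψ) ∧
      Module.finrank R (LinearMap.ker ψ) = k := by
  obtain ⟨φ, rfl⟩ := Module.projective_lifting_property (piMap fun _ => (Ideal.span {f}).mkQ) ψ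
    (Surjective.piMap fun _ => Submodule.mkQ_surjective _)
  have hex := Ideal.exact_smul_piMap_mkQ_span_singleton (ι := Fin l) f
  have hinj : Injective (f • LinearMap.id : (Fin l → R) →ₗ[R] Fin l → R) :=
    fun a b hab => funext fun i => (mul_cancel_left_mem_nonZeroDivisors hf).1 (congrFun hab i)
  obtain ⟨e⟩ := nonempty_equiv_ker_prod_of_surjective (surjective_coprod_of_exact hex hψ)
  obtain ⟨hfree, hrank⟩ := Module.free_and_finrank_add_eq_of_prod_equiv
    (((kerCoprodEquivKerComp hex hinj).symm.prodCongr (LinearEquiv.refl R _)).trans e.symm)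
  refine ⟨hfree, ?_⟩
  simpa [Module.finrank_prod] using hrank

/-- the local algebra behind Maruyama's elementary
transformation.  Let `R` be a commutative Noetherian local ring, `f ∈ R` a
non-zerodivisor, and `ψ : R^k → (R/(f))^l` a surjective `R`-module
homomorphism.  Then `ker ψ` is a free `R`-module of rank `k`. -/
theorem maruyama_kernel_free {R : Type*} [CommRing R] [IsNoetherianRing R]
    [IsLocalRing R] {f : R} (hf : f ∈ nonZeroDivisors R) (k l : ℕ)
    (ψ : (Fin k → R) →ₗ[R] (Fin l → R ⧸ Ideal.span ({f} : Set R)))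
    (hψ : Function.Surjective ψ) :
    Module.Free R (LinearMap.ker ψ) ∧
      Module.finrank R (LinearMap.ker ψ) = k :=
  maruyama_kernel_free_general hf k l ψ hψ
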